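/- Let β < 0, let q(x) = c₂x² + c₁x + c₀ be a quadratic polynomial with positive leading coefficient c₂ > 0, and let s > 0. Then the equation exp(βx)·q(x) = s has at most three distinct real solutions x. -/

import Mathlib

/-!
Multiplying by `exp (-β x)`, the solutions are the zeros of
`v x = c₂ x² + c₁ x + c₀ - s exp (-β x)`. Differentiating three times kills the quadratic part,
so `v''' x = s β³ exp (-β x)` never vanishes. By Rolle's theorem each differentiation loses at most
one zero, hence `v` has at most three.
-/

open Set Real

theorem Finset.card_le_card_add_one_of_hasDerivAt {f f' : ℝ → ℝ}
    (hf : ∀ x, HasDerivAt f (f' x) x) {s t : Finset ℝ} (hs : ↑s ⊆ {x | f x = 0})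
    (ht : {x | f' x = 0} ⊆ ↑t) : s.card ≤ t.card + 1 :=
  Finset.card_le_of_interleaved fun x hx y hy hxy _ => by
    obtain ⟨z, hz, hz0⟩ := exists_hasDerivAt_eq_zero hxy
      (fun z _ => (hf z).continuousAt.continuousWithinAt) ((hs hx).trans (hs hy).symm)
      (fun z _ => hf z)
    exact ⟨z, ht hz0, hz⟩

theorem encard_zeros_le_of_hasDerivAt {f f' : ℝ → ℝ} (hf : ∀ x, HasDerivAt f (f' x) x) :
    {x | f x = 0}.encard ≤ {x | f' x = 0}.encard + 1 := by
  obtain hinf | hfin := {x | f' x = 0}.infinite_or_finite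
  · simp [hinf.encard_eq]
  rw [hfin.encard_eq_coe_toFinset_card]
  by_contra! hlt
  obtain ⟨u, hu, hucard⟩ := exists_subset_encard_eq (Order.add_one_le_of_lt hlt)
  have hufin : u.Finite := finite_of_encard_eq_coe (k := hfin.toFinset.card + 2) (by
    rw [hucard]; norm_cast)
  have hle := Finset.card_le_card_add_one_of_hasDerivAt hf (s := hufin.toFinset)
    (by rwa [hufin.coe_toFinset]) hfin.coe_toFinset.superset
  rw [hufin.encard_eq_coe_toFinset_card] at hucard
  norm_cast at hucard
  omega

section QuadraticSubExp

variable (a c₀ c₁ c₂ s : ℝ)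

theorem hasDerivAt_quadratic_sub_exp (x : ℝ) :
    HasDerivAt (fun x => c₂ * x ^ 2 + c₁ * x + c₀ - s * exp (a * x))
      (2 * c₂ * x + c₁ - s * a * exp (a * x)) x :=
  ((((hasDerivAt_pow 2 x).const_mul c₂).add ((hasDerivAt_id x).const_mul c₁)).add_const c₀).sub
    (((hasDerivAt_id x).const_mul a).exp.const_mul s) |>.congr_deriv (by simp only [id]; ring)

theorem hasDerivAt_linear_sub_exp (x : ℝ) :
    HasDerivAt (fun x => 2 * c₂ * x + c₁ - s * a * exp (a * x))
      (2 * c₂ - s * a ^ 2 * exp (a * x)) x :=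
  (((hasDerivAt_id x).const_mul (2 * c₂)).add_const c₁).sub
    (((hasDerivAt_id x).const_mul a).exp.const_mul (s * a)) |>.congr_deriv (by simp only [id]; ring)

theorem hasDerivAt_const_sub_exp (x : ℝ) :
    HasDerivAt (fun x => 2 * c₂ - s * a ^ 2 * exp (a * x)) (-(s * a ^ 3 * exp (a * x))) x :=
  (((hasDerivAt_id x).const_mul a).exp.const_mul (s * a ^ 2)).const_sub (2 * c₂)
    |>.congr_deriv (by simp only [id]; ring)

theorem encard_zeros_quadratic_sub_exp_le_three (ha : a ≠ 0) (hs : s ≠ 0) :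
    {x | c₂ * x ^ 2 + c₁ * x + c₀ - s * exp (a * x) = 0}.encard ≤ 3 := by
  have hthird : {x | -(s * a ^ 3 * exp (a * x)) = 0} = ∅ := by
    ext x
    simp [ha, hs, (exp_pos _).ne']
  calc {x | c₂ * x ^ 2 + c₁ * x + c₀ - s * exp (a * x) = 0}.encard
      ≤ {x | 2 * c₂ * x + c₁ - s * a * exp (a * x) = 0}.encard + 1 :=
        encard_zeros_le_of_hasDerivAt (hasDerivAt_quadratic_sub_exp a c₀ c₁ c₂ s)
    _ ≤ {x | 2 * c₂ - s * a ^ 2 * exp (a * x) = 0}.encard + 1 + 1 := by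
        gcongr
        exact encard_zeros_le_of_hasDerivAt (hasDerivAt_linear_sub_exp a c₁ c₂ s)
    _ ≤ {x | -(s * a ^ 3 * exp (a * x)) = 0}.encard + 1 + 1 + 1 := by
        gcongr
        exact encard_zeros_le_of_hasDerivAt (hasDerivAt_const_sub_exp a c₂ s)
    _ = 3 := by
        rw [hthird, encard_empty]
        norm_num

end QuadraticSubExp

theorem stmt_0_general (β c₀ c₁ c₂ s : ℝ) (hβ : β < 0) (hs : 0 < s) :
    {x : ℝ | Real.exp (β * x) * (c₂ * x ^ 2 + c₁ * x + c₀) = s}.encard ≤ 3 := by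
  have hsub : {x : ℝ | Real.exp (β * x) * (c₂ * x ^ 2 + c₁ * x + c₀) = s} ⊆
      {x | c₂ * x ^ 2 + c₁ * x + c₀ - s * exp (-β * x) = 0} := by
    intro x hx
    rw [mem_ofPred_eq, ← hx, mul_right_comm, ← exp_add]
    ring_nf
    simp
  exact (encard_le_encard hsub).trans
    (encard_zeros_quadratic_sub_exp_le_three (-β) c₀ c₁ c₂ s (neg_ne_zero.2 hβ.ne) hs.ne')

theorem stmt_0 (β c₀ c₁ c₂ s : ℝ) (hβ : β < 0) (hc₂ : 0 < c₂) (hs : 0 < s) :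
    {x : ℝ | Real.exp (β * x) * (c₂ * x ^ 2 + c₁ * x + c₀) = s}.encard ≤ 3 :=
  stmt_0_general β c₀ c₁ c₂ s hβ hs
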